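/- Let μ be a probability measure on a measurable space X, let U ⊆ X be a measurable set with μ(U) > 0, and let g : X → ℝ be a bounded measurable function vanishing outside U. Let μ̄ denote the normalized restriction of μ to U, i.e. μ̄(A) = μ(A ∩ U)/μ(U) for measurable A. Then Var(g; μ) ≤ μ(U)·Var(g; μ̄) + ((1 − μ(U))/μ(U))·‖g‖_∞². -/

import Mathlib

/-!
Write `m = μ(U)`, `a = ∫ g² dμ` and `b = ∫ g dμ`. Since `g` vanishes off `U`, integrating
against `μ̄ = m⁻¹ • μ|_U` just divides `a` and `b` by `m`, so `m · Var(g; μ̄) = a - b² / m`.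
The claim then reads `(1 - m) b² / m ≤ (1 - m) ‖g‖_∞² / m`, which holds because
`|b| ≤ ‖g‖_∞` for a probability measure.
-/

open MeasureTheory

/-- The variance of a real-valued function `G` with respect to a measure `μ`:
`Var(G; μ) = ∫ G² dμ − (∫ G dμ)²`. -/
noncomputable def var {X : Type*} [MeasurableSpace X] (μ : Measure X) (G : X → ℝ) : ℝ :=
  (∫ x, (G x) ^ 2 ∂μ) - (∫ x, G x ∂μ) ^ 2

section EssSup

variable {X E : Type*} [MeasurableSpace X] [NormedAddCommGroup E] {μ : Measure X} {f : X → E}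

theorem ae_norm_le_toReal_eLpNormEssSup (hf : eLpNormEssSup f μ ≠ ⊤) :
    ∀ᵐ x ∂μ, ‖f x‖ ≤ (eLpNormEssSup f μ).toReal := by
  filter_upwards [ae_le_eLpNormEssSup (f := f) (μ := μ)] with x hx
  rw [← ofReal_norm] at hx
  exact (ENNReal.ofReal_le_iff_le_toReal hf).1 hx

theorem norm_integral_le_toReal_eLpNormEssSup [NormedSpace ℝ E] [IsProbabilityMeasure μ]
    (hf : eLpNormEssSup f μ ≠ ⊤) : ‖∫ x, f x ∂μ‖ ≤ (eLpNormEssSup f μ).toReal := by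
  simpa using norm_integral_le_of_norm_le_const (ae_norm_le_toReal_eLpNormEssSup hf)

end EssSup

theorem mul_var_inv_smul_restrict {X : Type*} [MeasurableSpace X] {μ : Measure X} {U : Set X}
    (hU0 : μ U ≠ 0) (hU : μ U ≠ ⊤) {g : X → ℝ} (hsupp : ∀ x, x ∉ U → g x = 0) :
    (μ U).toReal * var ((μ U)⁻¹ • μ.restrict U) g
      = ∫ x, g x ^ 2 ∂μ - (∫ x, g x ∂μ) ^ 2 / (μ U).toReal := by
  have hsq : ∀ x, x ∉ U → g x ^ 2 = 0 := fun x hx => by simp [hsupp x hx]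
  have hm : (μ U).toReal ≠ 0 := ENNReal.toReal_ne_zero.2 ⟨hU0, hU⟩
  rw [var, integral_smul_measure, integral_smul_measure, ENNReal.toReal_inv,
    setIntegral_eq_integral_of_forall_compl_eq_zero hsupp,
    setIntegral_eq_integral_of_forall_compl_eq_zero hsq, smul_eq_mul, smul_eq_mul]
  field_simp

theorem sub_sq_le_sub_sq_div_add_mul_sq {m a b S : ℝ} (hm0 : 0 < m) (hm1 : m ≤ 1)
    (hb : |b| ≤ S) :
    a - b ^ 2 ≤ (a - b ^ 2 / m) + (1 - m) / m * S ^ 2 := by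
  have hbS : b ^ 2 ≤ S ^ 2 := sq_le_sq' (abs_le.1 hb).1 (abs_le.1 hb).2
  have : 0 ≤ (1 - m) * (S ^ 2 - b ^ 2) / m :=
    div_nonneg (mul_nonneg (by linarith) (by linarith)) hm0.le
  calc a - b ^ 2 ≤ a - b ^ 2 + (1 - m) * (S ^ 2 - b ^ 2) / m := by linarith
    _ = (a - b ^ 2 / m) + (1 - m) / m * S ^ 2 := by field_simp; ring

theorem variance_normalized_restriction_general {X : Type*} [MeasurableSpace X] (μ : Measure X)
    [IsProbabilityMeasure μ] (U : Set X) (hU0 : 0 < μ U)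
    (g : X → ℝ) (hgbdd : ∃ C : ℝ, ∀ x, |g x| ≤ C)
    (hsupp : ∀ x, x ∉ U → g x = 0) :
    var μ g ≤ (μ U).toReal * var ((μ U)⁻¹ • μ.restrict U) g
      + ((1 - (μ U).toReal) / (μ U).toReal) * (eLpNormEssSup g μ).toReal ^ 2 := by
  obtain ⟨C, hC⟩ := hgbdd
  have hg : eLpNormEssSup g μ ≠ ⊤ :=
    (eLpNormEssSup_lt_top_of_ae_bound (C := C) (ae_of_all _ hC)).ne
  rw [mul_var_inv_smul_restrict hU0.ne' (measure_ne_top μ U) hsupp]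
  exact sub_sq_le_sub_sq_div_add_mul_sq (ENNReal.toReal_pos hU0.ne' (measure_ne_top μ U))
    measureReal_le_one (norm_integral_le_toReal_eLpNormEssSup hg)

/-- For a probability measure `μ`, a measurable set `U` with `μ(U) > 0` and a bounded
measurable `g` vanishing outside `U`, comparing the variance of `g` under `μ` with the
variance under the normalized restriction `μ̄ = μ(·∩U)/μ(U)`:
`Var(g; μ) ≤ μ(U)·Var(g; μ̄) + ((1 − μ(U))/μ(U))·‖g‖_∞²`. -/
theorem variance_normalized_restriction {X : Type*} [MeasurableSpace X] (μ : Measure X)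
    [IsProbabilityMeasure μ] (U : Set X) (hU : MeasurableSet U) (hU0 : 0 < μ U)
    (g : X → ℝ) (hg : Measurable g) (hgbdd : ∃ C : ℝ, ∀ x, |g x| ≤ C)
    (hsupp : ∀ x, x ∉ U → g x = 0) :
    var μ g ≤ (μ U).toReal * var ((μ U)⁻¹ • μ.restrict U) g
      + ((1 - (μ U).toReal) / (μ U).toReal) * (eLpNormEssSup g μ).toReal ^ 2 :=
  variance_normalized_restriction_general μ U hU0 g hgbdd hsupp
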